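/- arXiv:2109.10264 — 2 statements merged into one kernel-verified Lean document; each statement's English description precedes it below -/
import Mathlib

section
/- Let a < b be extended real numbers with (a, b) ≠ ℝ, let ω be a positive, twice continuously differentiable function on the open interval J = (a, b) satisfying (ω'(t)² − ω(t)·ω''(t)) / ω(t)⁴ ≤ −1 for all t ∈ J, and let f be a holomorphic function on the open unit disk 𝔻 ⊆ ℂ with Re f(z) ∈ J for all z ∈ 𝔻. Then for all z, w ∈ 𝔻, the ω-distance between the real parts satisfies d_ω(Re f(z), Re f(w)) ≤ σ(z, w), i.e. |∫_{Re f(w)}^{Re f(z)} ω(t) dt| ≤ σ(z, w). -/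
/-!
Write `λ(x) = k / cos (k (x - (α + β) / 2))` with `k = π / (β - α)` for the hyperbolic density
of the strip `α < re ζ < β`. Since `ζ ↦ tan (k (ζ - (α + β) / 2) / 2)` maps the strip into the
disk, the Schwarz–Pick lemma gives `λ (re G 0) ‖G' 0‖ ≤ 2` for every holomorphic map `G` of the
disk into the strip. A weight of curvature `≤ -1` on `[α, β]` is dominated by `λ`: `ω / λ`
vanishes at the ends, and at an interior maximum of `log (ω / λ)` we get
`ω² ≤ (log ω)'' ≤ (log λ)'' = λ²`. Shrinking the disk so that the real parts of `f` stay in a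
compact subinterval of `J` gives `ω (re f 0) ‖f' 0‖ ≤ 2`, a Möbius change of variable turns this
into `ω (re f ζ) ‖f' ζ‖ (1 - ‖ζ‖²) ≤ 2` on the whole disk, and integrating this along the
hyperbolic geodesic from `w` to `z` bounds the `ω`-distance by `σ(z, w)`.
-/

/-- The pseudo-hyperbolic distance on the unit disk. -/
noncomputable def pseudoHypDist (z w : ℂ) : ℝ :=
  ‖z - w‖ / ‖1 - (starRingEnd ℂ) z * w‖

/-- The hyperbolic distance on the unit disk (curvature −1, density 2/(1−|z|²)). -/
noncomputable def hypDist (z w : ℂ) : ℝ :=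
  Real.log ((1 + pseudoHypDist z w) / (1 - pseudoHypDist z w))

open Complex ComplexConjugate Metric Set Filter Topology
open scoped Real

noncomputable def diskMobius (c z : ℂ) : ℂ := (z + c) / (1 + conj c * z)

section diskMobius

variable {c z : ℂ}

lemma sq_norm_one_add_conj_mul_sub_sq_norm_add (c z : ℂ) :
    ‖1 + conj c * z‖ ^ 2 - ‖z + c‖ ^ 2 = (1 - ‖c‖ ^ 2) * (1 - ‖z‖ ^ 2) := by
  simp only [← normSq_eq_norm_sq, normSq_apply, add_re, add_im, one_re, one_im, mul_re, mul_im,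
    conj_re, conj_im]
  ring

lemma norm_add_lt_norm_one_add_conj_mul (hc : ‖c‖ < 1) (hz : ‖z‖ < 1) :
    ‖z + c‖ < ‖1 + conj c * z‖ := by
  have h := sq_norm_one_add_conj_mul_sub_sq_norm_add c z
  have : 0 < (1 - ‖c‖ ^ 2) * (1 - ‖z‖ ^ 2) := by
    apply mul_pos <;> nlinarith [norm_nonneg c, norm_nonneg z]
  exact lt_of_pow_lt_pow_left₀ 2 (norm_nonneg _) (by linarith)

lemma one_add_conj_mul_ne_zero (hc : ‖c‖ < 1) (hz : ‖z‖ < 1) : 1 + conj c * z ≠ 0 :=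
  norm_pos_iff.mp ((norm_nonneg _).trans_lt (norm_add_lt_norm_one_add_conj_mul hc hz))

lemma norm_diskMobius_lt_one (hc : ‖c‖ < 1) (hz : ‖z‖ < 1) : ‖diskMobius c z‖ < 1 := by
  rw [diskMobius, norm_div, div_lt_one ((norm_nonneg _).trans_lt
    (norm_add_lt_norm_one_add_conj_mul hc hz))]
  exact norm_add_lt_norm_one_add_conj_mul hc hz

lemma mapsTo_diskMobius (hc : c ∈ ball (0 : ℂ) 1) :
    MapsTo (diskMobius c) (ball 0 1) (ball 0 1) := fun _ hz ↦ by
  rw [mem_ball_zero_iff] at hc hz ⊢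
  exact norm_diskMobius_lt_one hc hz

@[simp]
lemma diskMobius_zero (c : ℂ) : diskMobius c 0 = c := by simp [diskMobius]

@[simp]
lemma diskMobius_neg_self (c : ℂ) : diskMobius (-c) c = 0 := by simp [diskMobius]

lemma diskMobius_diskMobius_neg (hc : ‖c‖ < 1) (hz : ‖z‖ < 1) :
    diskMobius c (diskMobius (-c) z) = z := by
  have hD : 1 - conj c * z ≠ 0 := by
    simpa [sub_eq_add_neg] using one_add_conj_mul_ne_zero (c := -c) (by rwa [norm_neg]) hz
  have hc' : 1 - conj c * c ≠ 0 := by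
    simpa [sub_eq_add_neg] using one_add_conj_mul_ne_zero (c := -c) (by rwa [norm_neg]) hc
  have hneg : diskMobius (-c) z = (z - c) / (1 - conj c * z) := by
    simp [diskMobius, sub_eq_add_neg]
  have hnum : diskMobius (-c) z + c = z * (1 - conj c * c) / (1 - conj c * z) := by
    rw [hneg, div_add' _ _ _ hD]; congr 1; ring
  have hden : 1 + conj c * diskMobius (-c) z = (1 - conj c * c) / (1 - conj c * z) := by
    rw [hneg, mul_div_assoc', add_div' _ _ _ hD]; congr 1; ring
  rw [diskMobius, hnum, hden, div_div_div_cancel_right₀ hD, mul_div_cancel_right₀ _ hc']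

lemma norm_diskMobius_neg (z w : ℂ) : ‖diskMobius (-w) z‖ = pseudoHypDist z w := by
  rw [diskMobius, pseudoHypDist, norm_div, ← norm_conj (1 - _), map_neg, map_sub, map_one,
    map_mul, conj_conj, ← sub_eq_add_neg, neg_mul, ← sub_eq_add_neg, mul_comm]

lemma hasDerivAt_diskMobius (hc : ‖c‖ < 1) (hz : ‖z‖ < 1) :
    HasDerivAt (diskMobius c) ((1 - ‖c‖ ^ 2) / (1 + conj c * z) ^ 2) z := by
  have hd := one_add_conj_mul_ne_zero hc hz
  refine (((hasDerivAt_id z).add_const c).div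
    (((hasDerivAt_id z).const_mul (conj c)).const_add 1) hd).congr_deriv ?_
  rw [← conj_mul', id]
  ring

end diskMobius

lemma norm_deriv_le_one_sub_sq_norm {H : ℂ → ℂ} (hd : DifferentiableOn ℂ H (ball 0 1))
    (hmaps : MapsTo H (ball 0 1) (ball 0 1)) : ‖deriv H 0‖ ≤ 1 - ‖H 0‖ ^ 2 := by
  set c := H 0
  have h0 : (0 : ℂ) ∈ ball 0 1 := mem_ball_self one_pos
  have hc : ‖c‖ < 1 := mem_ball_zero_iff.mp (hmaps h0)
  have hc' : ‖-c‖ < 1 := by rwa [norm_neg]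
  have hpos : 0 < 1 - ‖c‖ ^ 2 := by nlinarith [norm_nonneg c]
  have hΦ : HasDerivAt (diskMobius (-c) ∘ H) (deriv H 0 / (1 - ‖c‖ ^ 2 : ℝ)) 0 := by
    have hH := (hd.differentiableAt (ball_mem_nhds 0 one_pos)).hasDerivAt
    refine ((hasDerivAt_diskMobius hc' hc).comp 0 hH).congr_deriv ?_
    have : ((1 - ‖c‖ ^ 2 : ℝ) : ℂ) ≠ 0 := by exact_mod_cast hpos.ne'
    push_cast at this ⊢
    rw [norm_neg, map_neg, neg_mul, ← sub_eq_add_neg, conj_mul']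
    field_simp
  have hschwarz : ‖deriv (diskMobius (-c) ∘ H) 0‖ ≤ 1 := by
    refine Complex.norm_deriv_le_one_of_mapsTo_ball (fun ζ hζ ↦ ?_) (fun ζ hζ ↦ ?_) one_pos
    · exact ((hasDerivAt_diskMobius hc' (mem_ball_zero_iff.mp (hmaps hζ))).differentiableAt.comp ζ
        (hd.differentiableAt (isOpen_ball.mem_nhds hζ))).differentiableWithinAt
    · rw [Function.comp_apply, diskMobius_neg_self]
      exact ball_subset_closedBall (mapsTo_diskMobius (mem_ball_zero_iff.mpr hc') (hmaps hζ))
  rwa [hΦ.deriv, norm_div, Complex.norm_real, Real.norm_of_nonneg hpos.le, div_le_one hpos]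
    at hschwarz

lemma normSq_cos_sub_normSq_sin (τ : ℂ) :
    normSq (cos τ) - normSq (sin τ) = Real.cos (2 * τ.re) := by
  have h : ((normSq (cos τ) - normSq (sin τ) : ℝ) : ℂ) = cos (τ + conj τ) := by
    rw [cos_add, cos_conj, sin_conj, mul_conj, mul_conj]
    push_cast
    ring
  rw [add_conj, ← ofReal_cos] at h
  exact_mod_cast h

lemma cos_two_mul_re_pos {τ : ℂ} (h : |τ.re| < π / 4) : 0 < Real.cos (2 * τ.re) :=
  Real.cos_pos_of_mem_Ioo ⟨by linarith [abs_lt.mp h], by linarith [abs_lt.mp h]⟩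

lemma cos_ne_zero_of_abs_re_lt {τ : ℂ} (h : |τ.re| < π / 4) : cos τ ≠ 0 := by
  have hpos := cos_two_mul_re_pos h
  intro h0
  have := normSq_cos_sub_normSq_sin τ
  rw [h0, map_zero] at this
  linarith [normSq_nonneg (sin τ)]

lemma one_sub_sq_norm_tan {τ : ℂ} (hτ : cos τ ≠ 0) :
    1 - ‖tan τ‖ ^ 2 = Real.cos (2 * τ.re) / ‖cos τ‖ ^ 2 := by
  have hn : ‖cos τ‖ ^ 2 ≠ 0 := by positivity
  rw [← normSq_cos_sub_normSq_sin, tan_eq_sin_div_cos, norm_div, div_pow, normSq_eq_norm_sq,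
    normSq_eq_norm_sq]
  field_simp

lemma norm_tan_lt_one {τ : ℂ} (h : |τ.re| < π / 4) : ‖tan τ‖ < 1 := by
  have hne := cos_ne_zero_of_abs_re_lt h
  have : 0 < 1 - ‖tan τ‖ ^ 2 := by
    rw [one_sub_sq_norm_tan hne]; exact div_pos (cos_two_mul_re_pos h) (by positivity)
  nlinarith [norm_nonneg (tan τ)]

noncomputable def stripAngle (α β x : ℝ) : ℝ := π / (β - α) * (x - (α + β) / 2)

/-- The density of the hyperbolic metric of curvature `-1` on the strip `α < re ζ < β`, as a
function of `re ζ`. -/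
noncomputable def stripDensity (α β x : ℝ) : ℝ := π / (β - α) / Real.cos (stripAngle α β x)

section strip

variable {α β x : ℝ}

lemma abs_stripAngle_lt (hx : x ∈ Ioo α β) : |stripAngle α β x| < π / 2 := by
  have hαβ : 0 < β - α := by linarith [hx.1, hx.2]
  have hk : 0 < π / (β - α) := div_pos Real.pi_pos hαβ
  calc |stripAngle α β x| = π / (β - α) * |x - (α + β) / 2| := by
        rw [stripAngle, abs_mul, abs_of_pos hk]
    _ < π / (β - α) * ((β - α) / 2) := by
        gcongr; exact abs_lt.mpr ⟨by linarith [hx.1], by linarith [hx.2]⟩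
    _ = π / 2 := by field_simp

lemma cos_stripAngle_pos (hx : x ∈ Ioo α β) : 0 < Real.cos (stripAngle α β x) :=
  Real.cos_pos_of_mem_Ioo (abs_lt.mp (abs_stripAngle_lt hx))

lemma cos_stripAngle_left (h : α ≠ β) : Real.cos (stripAngle α β α) = 0 := by
  have : β - α ≠ 0 := sub_ne_zero.mpr h.symm
  rw [stripAngle, show α - (α + β) / 2 = -((β - α) / 2) by ring, mul_neg, Real.cos_neg,
    ← mul_div_assoc, div_mul_cancel₀ _ this, Real.cos_pi_div_two]

lemma cos_stripAngle_right (h : α ≠ β) : Real.cos (stripAngle α β β) = 0 := by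
  have : β - α ≠ 0 := sub_ne_zero.mpr h.symm
  rw [stripAngle, show β - (α + β) / 2 = (β - α) / 2 by ring,
    ← mul_div_assoc, div_mul_cancel₀ _ this, Real.cos_pi_div_two]

lemma hasDerivAt_stripAngle : HasDerivAt (stripAngle α β) (π / (β - α)) x := by
  unfold stripAngle
  exact (((hasDerivAt_id x).sub_const ((α + β) / 2)).const_mul (π / (β - α))).congr_deriv
    (mul_one _)

lemma continuous_stripAngle : Continuous (stripAngle α β) := by
  unfold stripAngle; fun_prop

lemma hasDerivAt_log_cos_stripAngle (hx : x ∈ Ioo α β) :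
    HasDerivAt (fun x ↦ Real.log (Real.cos (stripAngle α β x)))
      (-(π / (β - α) * Real.tan (stripAngle α β x))) x := by
  refine ((Real.hasDerivAt_cos _).comp x hasDerivAt_stripAngle |>.log
    (cos_stripAngle_pos hx).ne').congr_deriv ?_
  rw [Real.tan_eq_sin_div_cos, Function.comp_apply]
  ring

lemma hasDerivAt_mul_tan_stripAngle (hx : x ∈ Ioo α β) :
    HasDerivAt (fun x ↦ π / (β - α) * Real.tan (stripAngle α β x))
      ((π / (β - α)) ^ 2 / Real.cos (stripAngle α β x) ^ 2) x :=
  (((Real.hasDerivAt_tan (cos_stripAngle_pos hx).ne').comp x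
    hasDerivAt_stripAngle).const_mul _).congr_deriv (by ring)

end strip

lemma stripDensity_mul_norm_deriv_le {α β : ℝ} {G : ℂ → ℂ} (hG : DifferentiableOn ℂ G (ball 0 1))
    (hmaps : MapsTo (fun ζ ↦ (G ζ).re) (ball 0 1) (Ioo α β)) :
    stripDensity α β (G 0).re * ‖deriv G 0‖ ≤ 2 := by
  have h0 : (0 : ℂ) ∈ ball 0 1 := mem_ball_self one_pos
  have hαβ : 0 < β - α := by linarith [(hmaps h0).1, (hmaps h0).2]
  set k : ℝ := π / (β - α)
  have hk : 0 < k := div_pos Real.pi_pos hαβ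
  -- `A` maps the strip `α < re < β` onto the strip `|re| < π / 4`, which `tan` maps into the disk.
  set A : ℂ → ℂ := fun ζ ↦ (k / 2 : ℝ) * (ζ - ((α + β) / 2 : ℝ))
  have hA_re (ζ : ℂ) : 2 * (A ζ).re = stripAngle α β ζ.re := by
    simp only [A, stripAngle, re_ofReal_mul, sub_re, ofReal_re]; ring
  have hA_lt {ζ : ℂ} (hζ : ζ ∈ ball 0 1) : |(A (G ζ)).re| < π / 4 := by
    have := abs_stripAngle_lt (hmaps hζ)
    rw [← hA_re, abs_mul, abs_two] at this
    linarith
  have hH {ζ : ℂ} (hζ : ζ ∈ ball 0 1) :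
      HasDerivAt (fun ζ ↦ tan (A (G ζ))) (1 / cos (A (G ζ)) ^ 2 * ((k / 2 : ℝ) * deriv G ζ)) ζ := by
    have hAG : HasDerivAt (fun ζ ↦ A (G ζ)) ((k / 2 : ℝ) * deriv G ζ) ζ :=
      ((hG.differentiableAt (isOpen_ball.mem_nhds hζ)).hasDerivAt.sub_const _).const_mul _
    exact (hasDerivAt_tan (cos_ne_zero_of_abs_re_lt (hA_lt hζ))).comp ζ hAG
  have hSP := norm_deriv_le_one_sub_sq_norm (H := fun ζ ↦ tan (A (G ζ)))
    (fun ζ hζ ↦ (hH hζ).differentiableAt.differentiableWithinAt)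
    (fun ζ hζ ↦ mem_ball_zero_iff.mpr (norm_tan_lt_one (hA_lt hζ)))
  have hcos := cos_ne_zero_of_abs_re_lt (hA_lt h0)
  have hcos' : 0 < ‖cos (A (G 0))‖ ^ 2 := by positivity
  rw [(hH h0).deriv, one_sub_sq_norm_tan hcos, hA_re, norm_mul, norm_mul, norm_div, norm_one,
    norm_pow, norm_real, Real.norm_of_nonneg (by positivity), one_div_mul_eq_div,
    div_le_div_iff_of_pos_right hcos'] at hSP
  have hθ := cos_stripAngle_pos (hmaps h0)
  rw [stripDensity, div_mul_eq_mul_div, div_le_iff₀ hθ]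
  linarith

lemma IsLocalMax.nonpos_of_hasDerivAt_deriv {f f' : ℝ → ℝ} {x f'' : ℝ} (h : IsLocalMax f x)
    (hf : ∀ᶠ y in 𝓝 x, HasDerivAt f (f' y) y) (hf' : HasDerivAt f' f'' x) : f'' ≤ 0 := by
  have hderiv : deriv f =ᶠ[𝓝 x] f' := hf.mono fun y hy ↦ hy.deriv
  have h₂ : deriv (deriv f) x = f'' := (hf'.congr_of_eventuallyEq hderiv).deriv
  by_contra! hpos
  have hmin := isLocalMin_of_deriv_deriv_pos (h₂ ▸ hpos) h.deriv_eq_zero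
    hf.self_of_nhds.continuousAt
  have hconst : f =ᶠ[𝓝 x] fun _ ↦ f x := (hmin.and h).mono fun y hy ↦ le_antisymm hy.2 hy.1
  have : deriv (deriv f) x = 0 := by
    rw [hconst.deriv.deriv_eq]
    simp
  linarith

/-- The Gaussian curvature `-Δ log ω / ω²` of the metric `ω (re ζ) |dζ|`. -/
noncomputable def weightCurvature (ω : ℝ → ℝ) (t : ℝ) : ℝ :=
  (deriv ω t ^ 2 - ω t * deriv (deriv ω) t) / ω t ^ 4

section comparison

variable {ω : ℝ → ℝ} {α β : ℝ}

lemma sq_le_of_weightCurvature_le {t : ℝ} (hpos : 0 < ω t) (hcurv : weightCurvature ω t ≤ -1) :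
    ω t ^ 2 ≤ (ω t * deriv (deriv ω) t - deriv ω t ^ 2) / ω t ^ 2 := by
  rw [weightCurvature, div_le_iff₀ (by positivity)] at hcurv
  rw [le_div_iff₀ (by positivity)]
  linarith

lemma mul_cos_stripAngle_le_of_isLocalMax (hω : ContDiffOn ℝ 2 ω (Ioo α β))
    (hpos : ∀ x ∈ Ioo α β, 0 < ω x) (hcurv : ∀ x ∈ Ioo α β, weightCurvature ω x ≤ -1) {x₀ : ℝ}
    (hx₀ : x₀ ∈ Ioo α β) (hmax : IsLocalMax (fun x ↦ ω x * Real.cos (stripAngle α β x)) x₀) :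
    ω x₀ * Real.cos (stripAngle α β x₀) ≤ π / (β - α) := by
  have hk : 0 < π / (β - α) := div_pos Real.pi_pos (by linarith [hx₀.1, hx₀.2])
  have hω₁ : ∀ y ∈ Ioo α β, HasDerivAt ω (deriv ω y) y := fun y hy ↦
    ((hω.differentiableOn (by norm_num)).differentiableAt (isOpen_Ioo.mem_nhds hy)).hasDerivAt
  have hω₂ : HasDerivAt (deriv ω) (deriv (deriv ω) x₀) x₀ :=
    (((hω.deriv_of_isOpen isOpen_Ioo (by norm_num : (1 : WithTop ℕ∞) + 1 ≤ 2)).differentiableOn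
      (by norm_num)).differentiableAt (isOpen_Ioo.mem_nhds hx₀)).hasDerivAt
  have hnear : ∀ᶠ y in 𝓝 x₀, y ∈ Ioo α β := isOpen_Ioo.mem_nhds hx₀
  -- `log (ω cos θ)` differs from `log ω - log (stripDensity α β)` by a constant.
  have hmax' : IsLocalMax (fun x ↦ Real.log (ω x) + Real.log (Real.cos (stripAngle α β x))) x₀ := by
    filter_upwards [hmax, hnear] with y hy hyI
    rw [← Real.log_mul (hpos y hyI).ne' (cos_stripAngle_pos hyI).ne',
      ← Real.log_mul (hpos x₀ hx₀).ne' (cos_stripAngle_pos hx₀).ne']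
    exact Real.log_le_log (mul_pos (hpos y hyI) (cos_stripAngle_pos hyI)) hy
  have hh : ∀ᶠ y in 𝓝 x₀, HasDerivAt
      (fun x ↦ Real.log (ω x) + Real.log (Real.cos (stripAngle α β x)))
      (deriv ω y / ω y - π / (β - α) * Real.tan (stripAngle α β y)) y := by
    filter_upwards [hnear] with y hy
    exact ((hω₁ y hy).log (hpos y hy).ne').add (hasDerivAt_log_cos_stripAngle hy)
  have hh' : HasDerivAt (fun y ↦ deriv ω y / ω y - π / (β - α) * Real.tan (stripAngle α β y))
      ((ω x₀ * deriv (deriv ω) x₀ - deriv ω x₀ ^ 2) / ω x₀ ^ 2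
        - (π / (β - α)) ^ 2 / Real.cos (stripAngle α β x₀) ^ 2) x₀ :=
    ((hω₂.div (hω₁ x₀ hx₀) (hpos x₀ hx₀).ne').sub
      (hasDerivAt_mul_tan_stripAngle hx₀)).congr_deriv (by ring)
  have hsecond := hmax'.nonpos_of_hasDerivAt_deriv hh hh'
  have hcurv₀ := sq_le_of_weightCurvature_le (hpos x₀ hx₀) (hcurv x₀ hx₀)
  have hcos := cos_stripAngle_pos hx₀
  have hsq : (ω x₀ * Real.cos (stripAngle α β x₀)) ^ 2 ≤ (π / (β - α)) ^ 2 := by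
    have : ω x₀ ^ 2 ≤ (π / (β - α)) ^ 2 / Real.cos (stripAngle α β x₀) ^ 2 := by linarith
    rw [le_div_iff₀ (by positivity)] at this
    linarith [mul_pow (ω x₀) (Real.cos (stripAngle α β x₀)) 2]
  exact (pow_le_pow_iff_left₀ (mul_pos (hpos x₀ hx₀) hcos).le hk.le two_ne_zero).mp hsq

lemma le_stripDensity_of_weightCurvature_le (hωc : ContinuousOn ω (Icc α β))
    (hω : ContDiffOn ℝ 2 ω (Ioo α β)) (hpos : ∀ x ∈ Ioo α β, 0 < ω x)
    (hcurv : ∀ x ∈ Ioo α β, weightCurvature ω x ≤ -1) {x₀ : ℝ} (hx₀ : x₀ ∈ Ioo α β) :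
    ω x₀ ≤ stripDensity α β x₀ := by
  have hαβ : α < β := hx₀.1.trans hx₀.2
  -- `q = (π / (β - α)) ω / stripDensity α β` vanishes at both ends of `[α, β]`.
  set q : ℝ → ℝ := fun x ↦ ω x * Real.cos (stripAngle α β x)
  have hq : ContinuousOn q (Icc α β) :=
    hωc.mul (Real.continuous_cos.comp continuous_stripAngle).continuousOn
  obtain ⟨xs, hxs, hmax⟩ := isCompact_Icc.exists_isMaxOn (nonempty_Icc.mpr hαβ.le) hq
  have hk : 0 ≤ π / (β - α) := (div_pos Real.pi_pos (sub_pos.mpr hαβ)).le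
  have hq_le : q xs ≤ π / (β - α) := by
    rcases eq_endpoints_or_mem_Ioo_of_mem_Icc hxs with rfl | rfl | hxs'
    · simpa [q, cos_stripAngle_left hαβ.ne] using hk
    · simpa [q, cos_stripAngle_right hαβ.ne] using hk
    · exact mul_cos_stripAngle_le_of_isLocalMax hω hpos hcurv hxs'
        (hmax.isLocalMax (Icc_mem_nhds hxs'.1 hxs'.2))
  rw [stripDensity, le_div_iff₀ (cos_stripAngle_pos hx₀)]
  exact (hmax (Ioo_subset_Icc_self hx₀)).trans hq_le

end comparison

lemma IsCompact.exists_subset_Ioo_Icc_subset {J K : Set ℝ} (hK : IsCompact K) (hKne : K.Nonempty)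
    (hJ : IsOpen J) (hJc : J.OrdConnected) (hKJ : K ⊆ J) :
    ∃ α β, K ⊆ Ioo α β ∧ Icc α β ⊆ J := by
  obtain ⟨δ, hδ, hδJ⟩ := hK.exists_cthickening_subset_open hJ hKJ
  have hmem {x y : ℝ} (hy : y ∈ K) (hxy : |x - y| = δ) : x ∈ J :=
    hδJ (mem_cthickening_of_dist_le x y δ K hy (Real.dist_eq x y ▸ hxy.le))
  refine ⟨sInf K - δ, sSup K + δ, fun x hx ↦ ?_, hJc.out ?_ ?_⟩
  · exact ⟨by linarith [csInf_le hK.bddBelow hx], by linarith [le_csSup hK.bddAbove hx]⟩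
  · exact hmem (hK.sInf_mem hKne) (by rw [sub_sub_cancel_left, abs_neg, abs_of_pos hδ])
  · exact hmem (hK.sSup_mem hKne) (by rw [add_sub_cancel_left, abs_of_pos hδ])

lemma abs_integral_le_integral_of_hasDerivAt {g g' ω B : ℝ → ℝ} {a b : ℝ} (hab : a ≤ b)
    (hg : ∀ s ∈ Icc a b, HasDerivAt g (g' s) s) (hg' : ContinuousOn g' (Icc a b))
    (hω : ContinuousOn ω (g '' Icc a b)) (hB : IntervalIntegrable B MeasureTheory.volume a b)
    (hbound : ∀ s ∈ Icc a b, |ω (g s) * g' s| ≤ B s) :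
    |∫ t in g a..g b, ω t| ≤ ∫ s in a..b, B s := by
  rw [← intervalIntegral.integral_comp_mul_deriv' (by rwa [uIcc_of_le hab])
    (by rwa [uIcc_of_le hab]) (by rwa [uIcc_of_le hab])]
  have hcont : ContinuousOn (fun s ↦ ω (g s) * g' s) (Icc a b) :=
    (hω.comp (fun s hs ↦ (hg s hs).continuousAt.continuousWithinAt) (mapsTo_image g _)).mul hg'
  calc |∫ s in a..b, (ω ∘ g) s * g' s| ≤ ∫ s in a..b, |ω (g s) * g' s| :=
        intervalIntegral.abs_integral_le_integral_abs hab
    _ ≤ ∫ s in a..b, B s :=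
        intervalIntegral.integral_mono_on hab (hcont.intervalIntegrable_of_Icc hab).abs hB hbound

section hyperbolic

variable {ρ : ℝ}

lemma one_sub_sq_mul_pos {s : ℝ} (hs : s ∈ Icc (0 : ℝ) 1) (h₀ : 0 ≤ ρ) (h₁ : ρ < 1) :
    0 < 1 - (s * ρ) ^ 2 := by
  have : s * ρ ≤ ρ := mul_le_of_le_one_left h₀ hs.2
  nlinarith [mul_nonneg hs.1 h₀]

lemma intervalIntegrable_two_mul_div_one_sub_sq (h₀ : 0 ≤ ρ) (h₁ : ρ < 1) :
    IntervalIntegrable (fun s ↦ 2 * ρ / (1 - (s * ρ) ^ 2)) MeasureTheory.volume 0 1 :=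
  ContinuousOn.intervalIntegrable_of_Icc zero_le_one <| continuousOn_const.div (by fun_prop)
    fun s hs ↦ (one_sub_sq_mul_pos hs h₀ h₁).ne'

lemma integral_two_mul_div_one_sub_sq (h₀ : 0 ≤ ρ) (h₁ : ρ < 1) :
    ∫ s in (0 : ℝ)..1, 2 * ρ / (1 - (s * ρ) ^ 2) = Real.log ((1 + ρ) / (1 - ρ)) := by
  have hderiv : ∀ s ∈ uIcc (0 : ℝ) 1, HasDerivAt
      (fun s ↦ Real.log (1 + s * ρ) - Real.log (1 - s * ρ)) (2 * ρ / (1 - (s * ρ) ^ 2)) s := by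
    intro s hs
    rw [uIcc_of_le zero_le_one] at hs
    have hadd : 1 + s * ρ ≠ 0 := (by linarith [mul_nonneg hs.1 h₀] : 0 < 1 + s * ρ).ne'
    have hsub : 1 - s * ρ ≠ 0 :=
      (sub_pos.mpr ((mul_le_of_le_one_left h₀ hs.2).trans_lt h₁)).ne'
    refine ((((hasDerivAt_id s).mul_const ρ).const_add 1).log hadd |>.sub
      ((((hasDerivAt_id s).mul_const ρ).const_sub 1).log hsub)).congr_deriv ?_
    simp only [id, one_mul]
    rw [show 1 - (s * ρ) ^ 2 = (1 + s * ρ) * (1 - s * ρ) by ring]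
    rw [div_sub_div _ _ hadd hsub]
    ring
  rw [intervalIntegral.integral_eq_sub_of_hasDerivAt hderiv
    (intervalIntegrable_two_mul_div_one_sub_sq h₀ h₁), Real.log_div (by linarith) (by linarith)]
  simp

end hyperbolic

section weight

variable {J : Set ℝ} {ω : ℝ → ℝ} {F : ℂ → ℂ}

lemma weight_mul_norm_deriv_zero_le (hJ : IsOpen J) (hJc : J.OrdConnected)
    (hωpos : ∀ t ∈ J, 0 < ω t) (hω : ContDiffOn ℝ 2 ω J)
    (hcurv : ∀ t ∈ J, weightCurvature ω t ≤ -1) (hF : DifferentiableOn ℂ F (ball 0 1))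
    (hRe : MapsTo (fun ζ ↦ (F ζ).re) (ball 0 1) J) : ω (F 0).re * ‖deriv F 0‖ ≤ 2 := by
  -- Apply the strip estimate to `ζ ↦ F (r ζ)`, whose real part ranges over a compact part of `J`.
  have hr {r : ℝ} (hr : r ∈ Ioo 0 1) : r * (ω (F 0).re * ‖deriv F 0‖) ≤ 2 := by
    have hball : closedBall (0 : ℂ) r ⊆ ball 0 1 := closedBall_subset_ball hr.2
    have hrζ {ζ : ℂ} (hζ : ζ ∈ ball 0 1) : (r : ℂ) * ζ ∈ closedBall 0 r := by
      rw [mem_ball_zero_iff] at hζ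
      rw [mem_closedBall_zero_iff, norm_mul, norm_real, Real.norm_of_nonneg hr.1.le]
      exact mul_le_of_le_one_right hr.1.le hζ.le
    obtain ⟨α, β, hKI, hIJ⟩ := IsCompact.exists_subset_Ioo_Icc_subset
      ((isCompact_closedBall 0 r).image_of_continuousOn
        (continuous_re.comp_continuousOn (hF.continuousOn.mono hball)))
      ⟨_, mem_image_of_mem _ (mem_closedBall_self hr.1.le)⟩ hJ hJc
      (image_subset_iff.mpr fun ζ hζ ↦ hRe (hball hζ))
    have hG : DifferentiableOn ℂ (fun ζ ↦ F (r * ζ)) (ball 0 1) :=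
      hF.comp (differentiableOn_id.const_mul _) fun ζ hζ ↦ hball (hrζ hζ)
    have hstrip := stripDensity_mul_norm_deriv_le hG
      fun ζ hζ ↦ hKI (mem_image_of_mem _ (hrζ hζ))
    have hx₀ : (F 0).re ∈ Ioo α β := hKI (mem_image_of_mem _ (mem_closedBall_self hr.1.le))
    have hcmp := le_stripDensity_of_weightCurvature_le (hω.continuousOn.mono hIJ)
      (hω.mono (Ioo_subset_Icc_self.trans hIJ)) (fun t ht ↦ hωpos t (hIJ (Ioo_subset_Icc_self ht)))
      (fun t ht ↦ hcurv t (hIJ (Ioo_subset_Icc_self ht))) hx₀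
    rw [deriv_comp_mul_left, mul_zero, smul_eq_mul, norm_mul, norm_real,
      Real.norm_of_nonneg hr.1.le] at hstrip
    calc r * (ω (F 0).re * ‖deriv F 0‖) = ω (F 0).re * (r * ‖deriv F 0‖) := by ring
      _ ≤ stripDensity α β (F 0).re * (r * ‖deriv F 0‖) :=
        mul_le_mul_of_nonneg_right hcmp (mul_nonneg hr.1.le (norm_nonneg _))
      _ ≤ 2 := hstrip
  refine le_of_tendsto ?_ (eventually_of_mem (Ioo_mem_nhdsLT one_pos) fun r hr' ↦ hr hr')
  simpa using (tendsto_id.mul_const (ω (F 0).re * ‖deriv F 0‖)).mono_left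
    (nhdsWithin_le_nhds (a := (1 : ℝ)))

lemma weight_mul_norm_deriv_mul_le (hJ : IsOpen J) (hJc : J.OrdConnected)
    (hωpos : ∀ t ∈ J, 0 < ω t) (hω : ContDiffOn ℝ 2 ω J)
    (hcurv : ∀ t ∈ J, weightCurvature ω t ≤ -1) (hF : DifferentiableOn ℂ F (ball 0 1))
    (hRe : MapsTo (fun ζ ↦ (F ζ).re) (ball 0 1) J) {ζ : ℂ} (hζ : ζ ∈ ball 0 1) :
    ω (F ζ).re * (‖deriv F ζ‖ * (1 - ‖ζ‖ ^ 2)) ≤ 2 := by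
  have hζ' : ‖ζ‖ < 1 := mem_ball_zero_iff.mp hζ
  have hmob : HasDerivAt (diskMobius ζ) (1 - ‖ζ‖ ^ 2 : ℝ) 0 := by
    simpa using hasDerivAt_diskMobius (z := 0) hζ' (by simp)
  have hcomp : HasDerivAt (F ∘ diskMobius ζ) (deriv F ζ * (1 - ‖ζ‖ ^ 2 : ℝ)) 0 := by
    refine HasDerivAt.comp 0 ?_ hmob
    rw [diskMobius_zero]
    exact (hF.differentiableAt (isOpen_ball.mem_nhds hζ)).hasDerivAt
  have hF' : DifferentiableOn ℂ (F ∘ diskMobius ζ) (ball 0 1) :=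
    hF.comp (fun η hη ↦ (hasDerivAt_diskMobius hζ' (mem_ball_zero_iff.mp hη)).differentiableAt
      |>.differentiableWithinAt) (mapsTo_diskMobius hζ)
  have := weight_mul_norm_deriv_zero_le hJ hJc hωpos hω hcurv hF' (hRe.comp (mapsTo_diskMobius hζ))
  rwa [hcomp.deriv, Function.comp_apply, diskMobius_zero, norm_mul, norm_real,
    Real.norm_of_nonneg (by nlinarith [norm_nonneg ζ])] at this

lemma abs_integral_re_le_log (hJ : IsOpen J) (hJc : J.OrdConnected)
    (hωpos : ∀ t ∈ J, 0 < ω t) (hω : ContDiffOn ℝ 2 ω J)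
    (hcurv : ∀ t ∈ J, weightCurvature ω t ≤ -1) (hF : DifferentiableOn ℂ F (ball 0 1))
    (hRe : MapsTo (fun ζ ↦ (F ζ).re) (ball 0 1) J) {u : ℂ} (hu : u ∈ ball 0 1) :
    |∫ t in (F 0).re..(F u).re, ω t| ≤ Real.log ((1 + ‖u‖) / (1 - ‖u‖)) := by
  set ρ := ‖u‖
  have hρ : ρ < 1 := mem_ball_zero_iff.mp hu
  have hsu {s : ℝ} (hs : s ∈ Icc (0 : ℝ) 1) : (s : ℂ) * u ∈ ball 0 1 := by
    rw [mem_ball_zero_iff, norm_mul, norm_real, Real.norm_of_nonneg hs.1]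
    nlinarith [norm_nonneg u, hs.2]
  have hFd {s : ℝ} (hs : s ∈ Icc (0 : ℝ) 1) : HasDerivAt F (deriv F (s * u)) (s * u) :=
    (hF.differentiableAt (isOpen_ball.mem_nhds (hsu hs))).hasDerivAt
  have hbound : ∀ s ∈ Icc (0 : ℝ) 1,
      |ω (F (s * u)).re * (deriv F (s * u) * u).re| ≤ 2 * ρ / (1 - (s * ρ) ^ 2) := by
    intro s hs
    have hpos := hωpos _ (hRe (hsu hs))
    have hden := one_sub_sq_mul_pos hs (norm_nonneg u) hρ
    have hpt := weight_mul_norm_deriv_mul_le hJ hJc hωpos hω hcurv hF hRe (hsu hs)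
    rw [norm_mul, norm_real, Real.norm_of_nonneg hs.1, ← mul_assoc, ← le_div_iff₀ hden] at hpt
    calc |ω (F (s * u)).re * (deriv F (s * u) * u).re|
        ≤ ω (F (s * u)).re * (‖deriv F (s * u)‖ * ρ) := by
          rw [abs_mul, abs_of_pos hpos, ← norm_mul]
          exact mul_le_mul_of_nonneg_left (abs_re_le_norm _) hpos.le
      _ = ρ * (ω (F (s * u)).re * ‖deriv F (s * u)‖) := by ring
      _ ≤ ρ * (2 / (1 - (s * ρ) ^ 2)) := mul_le_mul_of_nonneg_left hpt (norm_nonneg u)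
      _ = 2 * ρ / (1 - (s * ρ) ^ 2) := by ring
  have hderiv_cont : ContinuousOn (deriv F) (ball 0 1) :=
    (hF.analyticOnNhd isOpen_ball).deriv.continuousOn
  have := abs_integral_le_integral_of_hasDerivAt zero_le_one
    (g := fun s : ℝ ↦ (F (s * u)).re) (g' := fun s ↦ (deriv F (s * u) * u).re)
    (fun s hs ↦ ((hFd hs).comp (s : ℂ) (hasDerivAt_mul_const u)).real_of_complex)
    (continuous_re.comp_continuousOn
      ((hderiv_cont.comp (by fun_prop) fun s hs ↦ hsu hs).mul continuousOn_const))
    (hω.continuousOn.mono (image_subset_iff.mpr fun s hs ↦ hRe (hsu hs)))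
    (intervalIntegrable_two_mul_div_one_sub_sq (norm_nonneg u) hρ) hbound
  simpa [integral_two_mul_div_one_sub_sq (norm_nonneg u) hρ] using this

end weight

theorem re_holomorphic_dist_decreasing_general (a b : EReal)
    (J : Set ℝ) (hJ : J = {t : ℝ | a < (t : EReal) ∧ (t : EReal) < b})
    (ω : ℝ → ℝ) (hωpos : ∀ t ∈ J, 0 < ω t) (hωC2 : ContDiffOn ℝ 2 ω J)
    (hcurv : ∀ t ∈ J, (deriv ω t ^ 2 - ω t * deriv (deriv ω) t) / ω t ^ 4 ≤ -1)
    (f : ℂ → ℂ)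
    (hf : ∀ z ∈ Metric.ball (0 : ℂ) 1, DifferentiableAt ℂ f z)
    (hRe : ∀ z ∈ Metric.ball (0 : ℂ) 1, (f z).re ∈ J)
    (z w : ℂ) (hz : z ∈ Metric.ball (0 : ℂ) 1) (hw : w ∈ Metric.ball (0 : ℂ) 1) :
    |∫ t in (f w).re..(f z).re, ω t| ≤ hypDist z w := by
  have hJo : IsOpen J := hJ ▸ isOpen_Ioo.preimage continuous_coe_real_ereal
  have hJc : J.OrdConnected := hJ ▸ ordConnected_Ioo.preimage_mono EReal.coe_strictMono.monotone
  have hw' : ‖w‖ < 1 := mem_ball_zero_iff.mp hw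
  -- Move `w` to the origin: `f ∘ diskMobius w` sends `0 ↦ f w` and `diskMobius (-w) z ↦ f z`.
  have hF : DifferentiableOn ℂ (f ∘ diskMobius w) (ball 0 1) := fun η hη ↦
    ((hf _ (mapsTo_diskMobius hw hη)).comp η (hasDerivAt_diskMobius hw'
      (mem_ball_zero_iff.mp hη)).differentiableAt).differentiableWithinAt
  have hu : diskMobius (-w) z ∈ ball 0 1 :=
    mapsTo_diskMobius (by rwa [mem_ball_zero_iff, norm_neg]) hz
  have := abs_integral_re_le_log hJo hJc hωpos hωC2 hcurv hF
    (fun η hη ↦ hRe _ (mapsTo_diskMobius hw hη)) hu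
  rwa [Function.comp_apply, Function.comp_apply, diskMobius_zero,
    diskMobius_diskMobius_neg hw' (mem_ball_zero_iff.mp hz), norm_diskMobius_neg] at this

/-- Let J = (a,b) ⊊ ℝ (a < b extended reals), let ω be a positive C²
weight on J with (ω'² − ω·ω'')/ω⁴ ≤ −1, and let f be holomorphic on the unit disk
with Re f ∈ J. Then d_ω(Re f(z), Re f(w)) ≤ σ(z, w). -/
theorem re_holomorphic_dist_decreasing (a b : EReal) (hab : a < b)
    (J : Set ℝ) (hJ : J = {t : ℝ | a < (t : EReal) ∧ (t : EReal) < b})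
    (hJne : J ≠ Set.univ)
    (ω : ℝ → ℝ) (hωpos : ∀ t ∈ J, 0 < ω t) (hωC2 : ContDiffOn ℝ 2 ω J)
    (hcurv : ∀ t ∈ J, (deriv ω t ^ 2 - ω t * deriv (deriv ω) t) / ω t ^ 4 ≤ -1)
    (f : ℂ → ℂ)
    (hf : ∀ z ∈ Metric.ball (0 : ℂ) 1, DifferentiableAt ℂ f z)
    (hRe : ∀ z ∈ Metric.ball (0 : ℂ) 1, (f z).re ∈ J)
    (z w : ℂ) (hz : z ∈ Metric.ball (0 : ℂ) 1) (hw : w ∈ Metric.ball (0 : ℂ) 1) :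
    |∫ t in (f w).re..(f z).re, ω t| ≤ hypDist z w :=
  re_holomorphic_dist_decreasing_general a b J hJ ω hωpos hωC2 hcurv f hf hRe z w hz hw
end

section
/- Let f be a holomorphic function on the open unit disk 𝔻 ⊆ ℂ with |Re f(z)| < 1 for all z ∈ 𝔻. Then for all z, w ∈ 𝔻, |∫_{Re f(w)}^{Re f(z)} (π/2)·(1/cos(π t/2)) dt| ≤ σ(z, w); that is, Re f is contractive with respect to the hyperbolic distance on 𝔻 and the distance on (−1, 1) induced by the weight ω(t) = (π/2)/cos(π t/2) (the hyperbolic distance on (−1,1) inherited from the strip (−1,1) × ℝ). -/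
/-!
The map `ζ ↦ tan (π ζ / 4)` sends the strip `|Re ζ| < 1` onto the unit disk, so
`g = tan (π f / 4)` is a holomorphic self-map of the disk and, by the Schwarz–Pick lemma
(the Schwarz lemma conjugated by disk automorphisms), does not increase `hypDist`.
The weight is the hyperbolic density of the strip restricted to its real diameter, and its primitive
`arsinh (tan (π s / 2))` at `s = Re ζ` is the signed hyperbolic distance from `tan (π ζ / 4)` to the
imaginary diameter of the disk. A signed distance to a geodesic is `1`-Lipschitz; comparing `cosh`
of both sides, this comes down to the inequality `√(a² - p²) √(b² - q²) ≤ a b - p q`.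
-/

open Real

open ComplexConjugate Metric Set
open Complex (normSq normSq_apply normSq_pos normSq_nonneg normSq_div)

noncomputable def diskMoebius (a ζ : ℂ) : ℂ := (ζ - a) / (1 - conj a * ζ)

lemma normSq_one_sub_conj_mul_sub_normSq_sub (a ζ : ℂ) :
    normSq (1 - conj a * ζ) - normSq (ζ - a) = (1 - normSq a) * (1 - normSq ζ) := by
  simp only [normSq_apply, Complex.sub_re, Complex.sub_im, Complex.mul_re,
    Complex.mul_im, Complex.conj_re, Complex.conj_im, Complex.one_re, Complex.one_im]
  ring

section DiskMoebius

variable {a ζ : ℂ}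

lemma one_sub_conj_mul_ne_zero (ha : ‖a‖ < 1) (hζ : ‖ζ‖ < 1) : 1 - conj a * ζ ≠ 0 := by
  have : ‖conj a * ζ‖ < ‖(1 : ℂ)‖ := by
    rw [norm_mul, Complex.norm_conj, norm_one]
    nlinarith [norm_nonneg a, norm_nonneg ζ]
  exact sub_ne_zero.2 fun h => this.ne' (congrArg norm h)

lemma norm_diskMoebius_lt_one (ha : ‖a‖ < 1) (hζ : ‖ζ‖ < 1) : ‖diskMoebius a ζ‖ < 1 := by
  have hden := normSq_pos.2 (one_sub_conj_mul_ne_zero ha hζ)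
  have hid := normSq_one_sub_conj_mul_sub_normSq_sub a ζ
  have hpos : 0 < (1 - normSq a) * (1 - normSq ζ) := by
    rw [← Complex.sq_norm, ← Complex.sq_norm]
    apply mul_pos <;> nlinarith [norm_nonneg a, norm_nonneg ζ]
  rw [← sq_lt_one_iff₀ (norm_nonneg _), Complex.sq_norm, diskMoebius, map_div₀, div_lt_one hden]
  linarith

lemma diskMoebius_self (a : ℂ) : diskMoebius a a = 0 := by simp [diskMoebius]

lemma diskMoebius_neg_zero (a : ℂ) : diskMoebius (-a) 0 = a := by simp [diskMoebius]

lemma diskMoebius_neg_diskMoebius (ha : ‖a‖ < 1) (hζ : ‖ζ‖ < 1) :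
    diskMoebius (-a) (diskMoebius a ζ) = ζ := by
  have hD := one_sub_conj_mul_ne_zero ha hζ
  have hden : 1 - -conj a * diskMoebius a ζ = (1 - conj a * a) / (1 - conj a * ζ) := by
    rw [diskMoebius]; field_simp; ring
  have hA := one_sub_conj_mul_ne_zero ha ha
  rw [diskMoebius, map_neg, hden, diskMoebius, sub_neg_eq_add, div_add' _ _ _ hD,
    div_div_div_cancel_right₀ hD, div_eq_iff hA]
  ring

lemma mapsTo_diskMoebius (ha : a ∈ ball (0 : ℂ) 1) :
    MapsTo (diskMoebius a) (ball 0 1) (ball 0 1) := fun ζ hζ => by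
  rw [mem_ball_zero_iff] at *
  exact norm_diskMoebius_lt_one ha hζ

lemma differentiableOn_diskMoebius (ha : a ∈ ball (0 : ℂ) 1) :
    DifferentiableOn ℂ (diskMoebius a) (ball 0 1) := fun ζ hζ => by
  rw [mem_ball_zero_iff] at *
  have := one_sub_conj_mul_ne_zero ha hζ
  unfold diskMoebius
  fun_prop (disch := assumption)

end DiskMoebius

lemma pseudoHypDist_eq_norm_diskMoebius (z w : ℂ) : pseudoHypDist z w = ‖diskMoebius z w‖ := by
  rw [pseudoHypDist, diskMoebius, norm_div, norm_sub_rev]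

theorem pseudoHypDist_le_of_mapsTo_ball {g : ℂ → ℂ} (hd : DifferentiableOn ℂ g (ball 0 1))
    (hm : MapsTo g (ball 0 1) (ball 0 1)) {z w : ℂ} (hz : z ∈ ball (0 : ℂ) 1)
    (hw : w ∈ ball (0 : ℂ) 1) :
    pseudoHypDist (g z) (g w) ≤ pseudoHypDist z w := by
  have hz' : -z ∈ ball (0 : ℂ) 1 := by simpa using hz
  let G := diskMoebius (g z) ∘ g ∘ diskMoebius (-z)
  have hGd : DifferentiableOn ℂ G (ball 0 1) :=
    (differentiableOn_diskMoebius (hm hz)).comp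
      (hd.comp (differentiableOn_diskMoebius hz') (mapsTo_diskMoebius hz'))
      (hm.comp (mapsTo_diskMoebius hz'))
  have hGm : MapsTo G (ball 0 1) (closedBall 0 1) :=
    ((mapsTo_diskMoebius (hm hz)).comp (hm.comp (mapsTo_diskMoebius hz'))).mono_right
      ball_subset_closedBall
  have hG0 : G 0 = 0 := by simp [G, diskMoebius_neg_zero, diskMoebius_self]
  have := Complex.norm_le_norm_of_mapsTo_ball hGd hGm hG0
    (norm_diskMoebius_lt_one (mem_ball_zero_iff.1 hz) (mem_ball_zero_iff.1 hw))
  have hzw := diskMoebius_neg_diskMoebius (mem_ball_zero_iff.1 hz) (mem_ball_zero_iff.1 hw)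
  simpa only [pseudoHypDist_eq_norm_diskMoebius, G, Function.comp_apply, hzw] using this

lemma pseudoHypDist_nonneg (z w : ℂ) : 0 ≤ pseudoHypDist z w := by
  unfold pseudoHypDist; positivity

section HypDist

variable {u v z w : ℂ}

lemma pseudoHypDist_lt_one (hz : ‖z‖ < 1) (hw : ‖w‖ < 1) : pseudoHypDist z w < 1 := by
  rw [pseudoHypDist_eq_norm_diskMoebius]
  exact norm_diskMoebius_lt_one hz hw

lemma hypDist_nonneg (hz : ‖z‖ < 1) (hw : ‖w‖ < 1) : 0 ≤ hypDist z w := by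
  have h0 := pseudoHypDist_nonneg z w
  have h1 := pseudoHypDist_lt_one hz hw
  exact Real.log_nonneg ((one_le_div (by linarith)).2 (by linarith))

lemma hypDist_le_hypDist_of_pseudoHypDist_le (h : pseudoHypDist u v ≤ pseudoHypDist z w)
    (hzw : pseudoHypDist z w < 1) : hypDist u v ≤ hypDist z w := by
  have h0 := pseudoHypDist_nonneg u v
  exact Real.log_le_log (div_pos (by linarith) (by linarith)) (by gcongr; linarith)

theorem hypDist_le_of_mapsTo_ball {g : ℂ → ℂ} (hd : DifferentiableOn ℂ g (ball 0 1))
    (hm : MapsTo g (ball 0 1) (ball 0 1)) (hz : z ∈ ball (0 : ℂ) 1) (hw : w ∈ ball (0 : ℂ) 1) :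
    hypDist (g z) (g w) ≤ hypDist z w :=
  hypDist_le_hypDist_of_pseudoHypDist_le (pseudoHypDist_le_of_mapsTo_ball hd hm hz hw)
    (pseudoHypDist_lt_one (mem_ball_zero_iff.1 hz) (mem_ball_zero_iff.1 hw))

lemma cosh_hypDist (hz : ‖z‖ < 1) (hw : ‖w‖ < 1) :
    cosh (hypDist z w) = (normSq (1 - conj z * w) + normSq (w - z)) /
      ((1 - normSq z) * (1 - normSq w)) := by
  have h0 := pseudoHypDist_nonneg z w
  have h1 := pseudoHypDist_lt_one hz hw
  have hsq : pseudoHypDist z w ^ 2 = normSq (w - z) / normSq (1 - conj z * w) := by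
    rw [pseudoHypDist_eq_norm_diskMoebius, Complex.sq_norm, diskMoebius, normSq_div]
  have hD := normSq_pos.2 (one_sub_conj_mul_ne_zero hz hw)
  have hid := normSq_one_sub_conj_mul_sub_normSq_sub z w
  have hlt : normSq (w - z) < normSq (1 - conj z * w) := by
    rw [← div_lt_one hD, ← hsq]; nlinarith
  set ρ := pseudoHypDist z w
  have hcosh : ((1 + ρ) / (1 - ρ) + ((1 + ρ) / (1 - ρ))⁻¹) / 2 = (1 + ρ ^ 2) / (1 - ρ ^ 2) := by
    have : 1 - ρ ≠ 0 := by linarith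
    have : 1 + ρ ≠ 0 := by linarith
    have : 1 - ρ ^ 2 ≠ 0 := by nlinarith
    field_simp
    ring
  rw [hypDist, Real.cosh_log (div_pos (by linarith) (by linarith)), hcosh, hsq, ← hid]
  generalize normSq (1 - conj z * w) = d at hD hlt
  have : d - normSq (w - z) ≠ 0 := by linarith
  field_simp

end HypDist

-- Aczél's inequality: `(a b - p q)² - (a² - p²) (b² - q²) = (a q - b p)²`.
lemma sqrt_sq_sub_sq_mul_sqrt_sq_sub_sq_le {a b p q : ℝ} (hp : |p| ≤ a) (hq : |q| ≤ b) :
    √(a ^ 2 - p ^ 2) * √(b ^ 2 - q ^ 2) ≤ a * b - p * q := by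
  have hp2 : p ^ 2 ≤ a ^ 2 := sq_le_sq' (abs_le.1 hp).1 (abs_le.1 hp).2
  have hq2 : q ^ 2 ≤ b ^ 2 := sq_le_sq' (abs_le.1 hq).1 (abs_le.1 hq).2
  have hpq : p * q ≤ a * b := by
    calc p * q ≤ |p| * |q| := by rw [← abs_mul]; exact le_abs_self _
      _ ≤ a * b := mul_le_mul hp hq (abs_nonneg q) ((abs_nonneg p).trans hp)
  rw [← Real.sqrt_mul (by linarith), Real.sqrt_le_left (by linarith)]
  nlinarith [sq_nonneg (a * q - b * p)]

lemma abs_two_mul_im_le_one_add_normSq (x : ℂ) : |2 * x.im| ≤ 1 + normSq x := by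
  refine abs_le_of_sq_le_sq ?_ (by linarith [normSq_nonneg x])
  rw [normSq_apply]
  nlinarith [sq_nonneg (1 - (x.re * x.re + x.im * x.im)), sq_nonneg x.re]

noncomputable def imagDiameterSignedDist (u : ℂ) : ℝ :=
  arsinh (2 * u.re / (1 - normSq u))

lemma cosh_imagDiameterSignedDist {u : ℂ} (hu : normSq u < 1) :
    cosh (imagDiameterSignedDist u) =
      √((1 + normSq u) ^ 2 - (2 * u.im) ^ 2) / (1 - normSq u) := by
  have hpos : 0 < 1 - normSq u := by linarith
  have h : 1 + (2 * u.re / (1 - normSq u)) ^ 2 =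
      ((1 + normSq u) ^ 2 - (2 * u.im) ^ 2) / (1 - normSq u) ^ 2 := by
    field_simp
    rw [normSq_apply]
    ring
  rw [imagDiameterSignedDist, Real.cosh_arsinh, h, Real.sqrt_div' _ (sq_nonneg _),
    Real.sqrt_sq hpos.le]

theorem abs_imagDiameterSignedDist_sub_le_hypDist {u v : ℂ} (hu : ‖u‖ < 1) (hv : ‖v‖ < 1) :
    |imagDiameterSignedDist u - imagDiameterSignedDist v| ≤ hypDist u v := by
  have hu2 : normSq u < 1 := by
    rw [← Complex.sq_norm]; exact pow_lt_one₀ (norm_nonneg u) hu two_ne_zero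
  have hv2 : normSq v < 1 := by
    rw [← Complex.sq_norm]; exact pow_lt_one₀ (norm_nonneg v) hv two_ne_zero
  rw [← abs_of_nonneg (hypDist_nonneg hu hv), ← Real.cosh_le_cosh, cosh_hypDist hu hv,
    Real.cosh_sub, cosh_imagDiameterSignedDist hu2, cosh_imagDiameterSignedDist hv2,
    imagDiameterSignedDist, imagDiameterSignedDist, Real.sinh_arsinh, Real.sinh_arsinh]
  calc
    _ = (√((1 + normSq u) ^ 2 - (2 * u.im) ^ 2) *
          √((1 + normSq v) ^ 2 - (2 * v.im) ^ 2) - 2 * u.re * (2 * v.re)) /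
          ((1 - normSq u) * (1 - normSq v)) := by
      rw [div_mul_div_comm, div_mul_div_comm, ← sub_div]
    _ ≤ ((1 + normSq u) * (1 + normSq v) - 2 * u.im * (2 * v.im) -
          2 * u.re * (2 * v.re)) / ((1 - normSq u) * (1 - normSq v)) := by
      gcongr
      exact sqrt_sq_sub_sq_mul_sqrt_sq_sub_sq_le (abs_two_mul_im_le_one_add_normSq u)
        (abs_two_mul_im_le_one_add_normSq v)
    _ = _ := by
      congr 1
      simp only [normSq_apply, Complex.sub_re, Complex.sub_im, Complex.mul_re,
        Complex.mul_im, Complex.conj_re, Complex.conj_im, Complex.one_re, Complex.one_im]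
      ring

namespace Complex

lemma sin_re (θ : ℂ) : (sin θ).re = Real.sin θ.re * Real.cosh θ.im := by
  rw [sin_eq θ]; simp [← ofReal_cos, ← ofReal_sin, ← ofReal_cosh, ← ofReal_sinh]

lemma sin_im (θ : ℂ) : (sin θ).im = Real.cos θ.re * Real.sinh θ.im := by
  rw [sin_eq θ]; simp [← ofReal_cos, ← ofReal_sin, ← ofReal_cosh, ← ofReal_sinh]

lemma cos_re (θ : ℂ) : (cos θ).re = Real.cos θ.re * Real.cosh θ.im := by
  rw [cos_eq θ]; simp [← ofReal_cos, ← ofReal_sin, ← ofReal_cosh, ← ofReal_sinh]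

lemma cos_im (θ : ℂ) : (cos θ).im = -(Real.sin θ.re * Real.sinh θ.im) := by
  rw [cos_eq θ]; simp [← ofReal_cos, ← ofReal_sin, ← ofReal_cosh, ← ofReal_sinh]

lemma normSq_cos_sub_normSq_sin (θ : ℂ) :
    normSq (cos θ) - normSq (sin θ) = Real.cos (2 * θ.re) := by
  rw [normSq_apply, normSq_apply, cos_re, cos_im, sin_re, sin_im, Real.cos_two_mul]
  linear_combination (Real.cos θ.re ^ 2 - Real.sin θ.re ^ 2) * Real.cosh_sq θ.im -
    Real.sin_sq_add_cos_sq θ.re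

variable {θ : ℂ}

lemma cos_ne_zero_of_cos_two_mul_re_pos (h : 0 < Real.cos (2 * θ.re)) : cos θ ≠ 0 := by
  intro h0
  have := normSq_cos_sub_normSq_sin θ
  rw [h0, map_zero] at this
  linarith [normSq_nonneg (sin θ)]

lemma norm_tan_lt_one (h : 0 < Real.cos (2 * θ.re)) : ‖tan θ‖ < 1 := by
  have hcos := normSq_pos.2 (cos_ne_zero_of_cos_two_mul_re_pos h)
  rw [← sq_lt_one_iff₀ (norm_nonneg _), Complex.sq_norm, tan_eq_sin_div_cos, map_div₀,
    div_lt_one hcos]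
  linarith [normSq_cos_sub_normSq_sin θ]

lemma two_mul_re_tan_div_one_sub_normSq_tan (h : 0 < Real.cos (2 * θ.re)) :
    2 * (tan θ).re / (1 - normSq (tan θ)) = Real.tan (2 * θ.re) := by
  have hcos := normSq_pos.2 (cos_ne_zero_of_cos_two_mul_re_pos h)
  have hre : (tan θ).re = Real.sin (2 * θ.re) / 2 / normSq (cos θ) := by
    rw [tan_eq_sin_div_cos, div_re, sin_re, sin_im, cos_re, cos_im, Real.sin_two_mul]
    field_simp
    linear_combination (Real.sin θ.re * Real.cos θ.re) * Real.cosh_sq θ.im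
  have hnorm : 1 - normSq (tan θ) = Real.cos (2 * θ.re) / normSq (cos θ) := by
    rw [tan_eq_sin_div_cos, map_div₀, ← normSq_cos_sub_normSq_sin]
    field_simp
  rw [hre, hnorm, Real.tan_eq_sin_div_cos]
  field_simp

end Complex

lemma imagDiameterSignedDist_tan {θ : ℂ} (h : 0 < Real.cos (2 * θ.re)) :
    imagDiameterSignedDist (Complex.tan θ) = arsinh (Real.tan (2 * θ.re)) := by
  rw [imagDiameterSignedDist, Complex.two_mul_re_tan_div_one_sub_normSq_tan h]

lemma two_mul_re_pi_mul_div_four (a : ℂ) : 2 * ((π : ℂ) * a / 4).re = π * a.re / 2 := by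
  simp only [Complex.div_ofNat_re, Complex.mul_re, Complex.ofReal_re, Complex.ofReal_im, zero_mul,
    sub_zero]
  ring

lemma cos_pi_mul_div_two_pos {t : ℝ} (ht : |t| < 1) : 0 < Real.cos (π * t / 2) := by
  obtain ⟨h1, h2⟩ := abs_lt.1 ht
  apply Real.cos_pos_of_mem_Ioo
  constructor <;> nlinarith [Real.pi_pos]

lemma hasDerivAt_arsinh_tan {x : ℝ} (hx : 0 < Real.cos x) :
    HasDerivAt (fun x => arsinh (Real.tan x)) (1 / Real.cos x) x := by
  have h := (Real.hasDerivAt_arsinh _).comp x (Real.hasDerivAt_tan hx.ne')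
  have hsqrt : √(1 + Real.tan x ^ 2) = (Real.cos x)⁻¹ := by
    rw [← inv_inv (1 + Real.tan x ^ 2), Real.inv_one_add_tan_sq hx.ne', Real.sqrt_inv,
      Real.sqrt_sq hx.le]
  refine h.congr_deriv ?_
  rw [hsqrt]
  field_simp

lemma integral_strip_weight {a b : ℝ} (ha : |a| < 1) (hb : |b| < 1) :
    ∫ t in a..b, (π / 2) * (1 / Real.cos (π * t / 2)) =
      arsinh (Real.tan (π * b / 2)) - arsinh (Real.tan (π * a / 2)) := by
  have hab : uIcc a b ⊆ Ioo (-1) 1 := ordConnected_Ioo.uIcc_subset (abs_lt.1 ha) (abs_lt.1 hb)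
  have hcos : ∀ t ∈ uIcc a b, 0 < Real.cos (π * t / 2) := fun t ht =>
    cos_pi_mul_div_two_pos (abs_lt.2 (hab ht))
  apply intervalIntegral.integral_eq_sub_of_hasDerivAt
  · intro t ht
    have h := (hasDerivAt_arsinh_tan (hcos t ht)).comp t
      (((hasDerivAt_id t).const_mul π).div_const 2)
    exact h.congr_deriv (by simp only [mul_one]; ring)
  · refine ContinuousOn.intervalIntegrable (continuousOn_const.mul
      (continuousOn_const.div (by fun_prop) fun t ht => (hcos t ht).ne'))

/-- If f is holomorphic on the unit disk with |Re f| < 1, then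
`|∫_{Re f(w)}^{Re f(z)} (π/2)/cos(πt/2) dt| ≤ σ(z,w)` (Chen's theorem). -/
theorem re_holomorphic_strip_contraction (f : ℂ → ℂ)
    (hf : ∀ z ∈ Metric.ball (0 : ℂ) 1, DifferentiableAt ℂ f z)
    (hRe : ∀ z ∈ Metric.ball (0 : ℂ) 1, |(f z).re| < 1)
    (z w : ℂ) (hz : z ∈ Metric.ball (0 : ℂ) 1) (hw : w ∈ Metric.ball (0 : ℂ) 1) :
    |∫ t in (f w).re..(f z).re, (π / 2) * (1 / Real.cos (π * t / 2))| ≤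
      hypDist z w := by
  let g : ℂ → ℂ := fun ζ => Complex.tan (π * f ζ / 4)
  have hcos : ∀ ζ ∈ ball (0 : ℂ) 1, 0 < Real.cos (2 * ((π : ℂ) * f ζ / 4).re) := fun ζ hζ => by
    rw [two_mul_re_pi_mul_div_four]
    exact cos_pi_mul_div_two_pos (hRe ζ hζ)
  have hg_maps : MapsTo g (ball 0 1) (ball 0 1) := fun ζ hζ =>
    mem_ball_zero_iff.2 (Complex.norm_tan_lt_one (hcos ζ hζ))
  have hg_diff : DifferentiableOn ℂ g (ball 0 1) := fun ζ hζ => by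
    have hθ : DifferentiableAt ℂ (fun ξ => (π : ℂ) * f ξ / 4) ζ :=
      ((hf ζ hζ).const_mul _).div_const 4
    have htan := Complex.hasDerivAt_tan (Complex.cos_ne_zero_of_cos_two_mul_re_pos (hcos ζ hζ))
    exact (htan.differentiableAt.comp ζ hθ).differentiableWithinAt
  have hg_dist : ∀ ζ ∈ ball (0 : ℂ) 1,
      imagDiameterSignedDist (g ζ) = arsinh (Real.tan (π * (f ζ).re / 2)) := fun ζ hζ => by
    rw [imagDiameterSignedDist_tan (hcos ζ hζ), two_mul_re_pi_mul_div_four]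
  rw [integral_strip_weight (hRe w hw) (hRe z hz), ← hg_dist z hz, ← hg_dist w hw]
  exact (abs_imagDiameterSignedDist_sub_le_hypDist (mem_ball_zero_iff.1 (hg_maps hz))
    (mem_ball_zero_iff.1 (hg_maps hw))).trans (hypDist_le_of_mapsTo_ball hg_diff hg_maps hz hw)
end
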